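/- An idempotent monoid acts invertibly on its modules: in a monoidal category, if E is a monoid whose multiplication E ⊗ E ⟶ E is an isomorphism and M is an E-module, then M is isomorphic to E ⊗ M via the unit map η ⊗ 1 : M ≅ 𝟙 ⊗ M ⟶ E ⊗ M, with inverse the action map. -/

import Mathlib

/-!
Since `η ▷ E ≫ μ = λ_ E`, invertibility of `μ` makes `η ▷ E` invertible, hence also
`η ▷ (E ⊗ X)`. Unitality of the action makes `X` a retract of `E ⊗ X`, so by naturality of
`η ▷ -` the arrow `η ▷ X` is a retract of `η ▷ (E ⊗ X)` and is invertible as well. The unit map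
`X ⟶ E ⊗ X` is then an isomorphism with left inverse the action, which is therefore its inverse.
-/

open CategoryTheory MonoidalCategory MonObj

namespace CategoryTheory

variable {C : Type*} [Category C] [MonoidalCategory C]

theorem isIso_whiskerRight_tensor {X Y : C} (f : X ⟶ Y) (Z W : C) [IsIso (f ▷ Z)] :
    IsIso (f ▷ (Z ⊗ W)) := by
  rw [whiskerRight_tensor]
  infer_instance

instance MonObj.isIso_one_whiskerRight_of_isIso_mul (E : C) [MonObj E] [IsIso μ[E]] :
    IsIso (η[E] ▷ E) := by
  rw [(IsIso.eq_comp_inv _).mpr (one_mul E)]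
  infer_instance

namespace ModObj

variable {E : C} [MonObj E] (X : C) [ModObj E X]

def retractTensor : Retract X (E ⊗ X) where
  i := (λ_ X).inv ≫ η ▷ X
  r := γ[E, X]

variable [IsIso μ[E]]

theorem isIso_one_whiskerRight : IsIso (η[E] ▷ X) :=
  (MorphismProperty.isomorphisms C).of_retract
    (NatTrans.retractArrowApp ((tensoringLeft C).map η[E]) (retractTensor X))
    (isIso_whiskerRight_tensor η[E] E X)

def isoTensorOfIsIsoMul : X ≅ E ⊗ X where
  hom := (λ_ X).inv ≫ η ▷ X
  inv := γ[E, X]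
  hom_inv_id := (retractTensor X).retract
  inv_hom_id := by
    have := isIso_one_whiskerRight (E := E) X
    rw [← IsIso.inv_eq_of_hom_inv_id (f := (λ_ X).inv ≫ η ▷ X) (g := γ[E, X])
      (retractTensor X).retract, IsIso.inv_hom_id]

end ModObj

end CategoryTheory

/-- An idempotent monoid acts invertibly on its modules: if the multiplication of `E`
is an isomorphism, then for any `E`-module `M` the map
`M ≅ 𝟙 ⊗ M ⟶ E ⊗ M` given by the unit is inverse to the action map. -/
theorem module_iso_of_idempotent_monoid
    {C : Type*} [Category C] [MonoidalCategory C] (E : Mon C) [IsIso (MonObj.mul (X := E.X))]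
    (M : Mod C E.X) :
    (λ_ M.X).inv ≫ (MonObj.one (X := E.X) ▷ M.X) ≫ (ModObj.smul (M := E.X) (X := M.X) : E.X ⊗ M.X ⟶ M.X) = 𝟙 M.X ∧
      (ModObj.smul (M := E.X) (X := M.X) : E.X ⊗ M.X ⟶ M.X) ≫ (λ_ M.X).inv ≫ (MonObj.one (X := E.X) ▷ M.X) = 𝟙 (E.X ⊗ M.X) :=
  ⟨by simp, (ModObj.isoTensorOfIsIsoMul (E := E.X) M.X).inv_hom_id⟩
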